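/- For every 0 < α ≤ 1 and every t ∈ ℝ, (1 − |t|^α)_+ = α (1 − |t|)_+ + (1−α) α ∫_1^∞ (1 − |t| s)_+ s^{−α−1} ds. (In terms of characteristic functions this says μ_α = μ_1 ∘ (α δ̃_1 + (1−α) π̃_α), i.e. the weakly stable measure with characteristic function (1 − |t|^α)_+ is the scale mixture of the measure with characteristic function (1 − |t|)_+ by the mixture of the symmetrized Dirac measure at 1 and the symmetrized Pareto distribution with density (α/2)|s|^{−α−1} 1_{(1,∞)}(|s|).) -/

import Mathlib

/-!
With `r = |t|`, the factor `(1 - r s)_+` cuts the integral off at `s = 1/r`. For `r ≥ 1` both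
sides vanish; for `r ≤ 1` the integral is elementary,
`∫_1^{1/r} (s^(-α-1) - r s^(-α)) ds = (1 - r^α)/α - (r^α - r)/(1 - α)`,
and the identity reduces to algebra.
-/

open MeasureTheory Set

theorem setIntegral_Ioi_one_max_one_sub_mul (f : ℝ → ℝ) {r : ℝ} (hr : 0 < r) :
    ∫ s in Ioi 1, max (1 - r * s) 0 * f s = ∫ s in Ioc 1 r⁻¹, (1 - r * s) * f s := by
  rw [← Ioi_inter_Iic, ← setIntegral_indicator measurableSet_Iic]
  refine setIntegral_congr_fun measurableSet_Ioi fun s _ => ?_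
  have hle : s ∈ Iic r⁻¹ ↔ r * s ≤ 1 := by simpa using le_inv_mul_iff₀ (b := 1) (a := s) hr
  by_cases hs : r * s ≤ 1
  · rw [indicator_of_mem (hle.mpr hs), max_eq_left (sub_nonneg.mpr hs)]
  · rw [indicator_of_notMem (mt hle.mp hs), max_eq_right (by linarith), zero_mul]

theorem intervalIntegral_one_sub_mul_mul_rpow {α r : ℝ} (hα0 : α ≠ 0) (hα1 : α ≠ 1) (hr : 0 < r) :
    ∫ s in (1:ℝ)..r⁻¹, (1 - r * s) * s ^ (-α - 1) = (1 - r ^ α) / α - (r ^ α - r) / (1 - α) := by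
  have h0 : (0:ℝ) ∉ uIcc 1 r⁻¹ := notMem_uIcc_of_lt one_pos (inv_pos.mpr hr)
  have hsplit : ∀ s ∈ uIcc 1 r⁻¹, (1 - r * s) * s ^ (-α - 1) = s ^ (-α - 1) - r * s ^ (-α) := by
    intro s hs
    have hs0 : s ≠ 0 := fun h => h0 (h ▸ hs)
    rw [Real.rpow_sub_one hs0]
    field_simp
  rw [intervalIntegral.integral_congr hsplit,
    intervalIntegral.integral_sub (intervalIntegral.intervalIntegrable_rpow (Or.inr h0))
      ((intervalIntegral.intervalIntegrable_rpow (Or.inr h0)).const_mul r),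
    intervalIntegral.integral_const_mul,
    integral_rpow (Or.inr ⟨by contrapose! hα0; linarith, h0⟩),
    integral_rpow (Or.inr ⟨by contrapose! hα1; linarith, h0⟩)]
  simp only [Real.inv_rpow hr.le, Real.one_rpow, sub_add_cancel, neg_add_eq_sub]
  rw [Real.rpow_neg hr.le, inv_inv, Real.rpow_sub hr, Real.rpow_one]
  have h1α : (1:ℝ) - α ≠ 0 := sub_ne_zero.mpr (Ne.symm hα1)
  field_simp
  ring

theorem setIntegral_Ioi_one_max_one_sub_mul_eq_zero (f : ℝ → ℝ) {r : ℝ} (hr : 1 ≤ r) :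
    ∫ s in Ioi 1, max (1 - r * s) 0 * f s = 0 := by
  rw [setIntegral_Ioi_one_max_one_sub_mul f (by linarith),
    Ioc_eq_empty (not_lt.mpr (inv_le_one_of_one_le₀ hr)), Measure.restrict_empty,
    integral_zero_measure]

theorem setIntegral_Ioi_one_max_one_sub_mul_mul_rpow {α r : ℝ} (hα : 0 < α) (hα1 : α ≠ 1)
    (hr0 : 0 ≤ r) (hr1 : r ≤ 1) :
    ∫ s in Ioi 1, max (1 - r * s) 0 * s ^ (-α - 1) = (1 - r ^ α) / α - (r ^ α - r) / (1 - α) := by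
  obtain rfl | hr := hr0.eq_or_lt
  · simp only [zero_mul, sub_zero, max_eq_left zero_le_one, one_mul,
      integral_Ioi_rpow_of_lt (by linarith : -α - 1 < -1) one_pos, Real.zero_rpow hα.ne',
      Real.one_rpow, sub_add_cancel]
    ring
  · rw [setIntegral_Ioi_one_max_one_sub_mul _ hr,
      ← intervalIntegral.integral_of_le (one_le_inv₀ hr |>.mpr hr1),
      intervalIntegral_one_sub_mul_mul_rpow hα.ne' hα1 hr]

theorem kendall_charFun_mixture
    (α : ℝ) (hα : 0 < α) (t : ℝ) :
    max (1 - |t| ^ α) 0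
      = α * max (1 - |t|) 0
        + (1 - α) * α * ∫ s in Set.Ioi (1:ℝ), max (1 - |t| * s) 0 * s ^ (-α - 1) := by
  obtain rfl | hα1 := eq_or_ne α 1
  · simp
  rcases le_total 1 |t| with ht | ht
  · rw [setIntegral_Ioi_one_max_one_sub_mul_eq_zero _ ht,
      max_eq_right (by linarith [Real.one_le_rpow ht hα.le]), max_eq_right (by linarith)]
    ring
  · rw [setIntegral_Ioi_one_max_one_sub_mul_mul_rpow hα hα1 (abs_nonneg t) ht,
      max_eq_left (by linarith [Real.rpow_le_one (abs_nonneg t) ht hα.le]),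
      max_eq_left (by linarith)]
    have h1α : (1:ℝ) - α ≠ 0 := sub_ne_zero.mpr (Ne.symm hα1)
    field_simp
    ring
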